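/- For the key graph L_{r,s} (a cycle C_r with a path P_s attached by an edge to one cycle vertex, r ≠ 4, r ≡ 0 mod 5 and s ≡ 0 mod 5), the disjunctive total domination number equals 2n/5 where n = r + s. -/

import Mathlib

open SimpleGraph

def IsDTDSet {V : Type*} (G : SimpleGraph V) (S : Finset V) : Prop :=
  ∀ v : V, (∃ u ∈ S, G.Adj v u) ∨
    ∃ u ∈ S, ∃ w ∈ S, u ≠ w ∧ G.dist v u = 2 ∧ G.dist v w = 2

noncomputable def dtdNum {V : Type*} (G : SimpleGraph V) : ℕ :=
  sInf {k | ∃ S : Finset V, IsDTDSet G S ∧ S.card = k}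

def keyG (r s : ℕ) : SimpleGraph (Fin r ⊕ Fin s) :=
  SimpleGraph.fromRel (fun a b =>
    match a, b with
    | Sum.inl x, Sum.inl y => ((x : ℕ) + 1) % r = (y : ℕ)
    | Sum.inr x, Sum.inr y => (x : ℕ) + 1 = (y : ℕ)
    | Sum.inl x, Sum.inr y => (x : ℕ) = 0 ∧ (y : ℕ) = 0
    | _, _ => False)

/-!
Upper bound: the cycle vertices `c_i` with `i ≡ 1, 2` and the path vertices `p_j` with
`j ≡ 2, 3 (mod 5)` form a disjunctive total dominating set of size `2n/5`.

Lower bound: if a vertex and its two neighbours all have degree two, a DTD set `S` contains one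
of the two neighbours or both vertices at distance two. Used at the three middle vertices of
five consecutive non-branching vertices, this puts at least two of them in `S`. The path, read
from the cycle vertex `c_0` it hangs on, splits into `s/5` such windows. On the cycle we
average over all `r` windows: each window avoiding `c_0` meets `S` at least twice, and the five
windows through `c_0` meet it at least six times in total, so `5 |S ∩ C_r| ≥ 2r - 4`, which
gives `|S ∩ C_r| ≥ 2r/5` because `5 ∣ r`.
-/

open Finset

theorem Finset.sum_range_mul_eq_sum_sum {M : Type*} [AddCommMonoid M] (f : ℕ → M) (n q : ℕ) :
    ∑ i ∈ range (n * q), f i = ∑ m ∈ range q, ∑ k ∈ range n, f (n * m + k) := by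
  induction q with
  | zero => simp
  | succ q ih => rw [Nat.mul_succ, sum_range_add, ih, sum_range_succ]

theorem Finset.card_toLeft_eq_sum {α β : Type*} [Fintype α] [DecidableEq α] [DecidableEq β]
    (u : Finset (α ⊕ β)) : #u.toLeft = ∑ a, if .inl a ∈ u then 1 else 0 := by
  rw [← card_filter]
  congr 1
  ext a
  simp

theorem Finset.card_toRight_eq_sum {α β : Type*} [Fintype β] [DecidableEq α] [DecidableEq β]
    (u : Finset (α ⊕ β)) : #u.toRight = ∑ b, if .inr b ∈ u then 1 else 0 := by
  rw [← card_filter]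
  congr 1
  ext b
  simp

theorem card_filter_mod_five {n a b : ℕ} (hn : n % 5 = 0) (ha : a < 5) (hb : b < 5)
    (hab : a ≠ b) :
    #{i : Fin n | (i : ℕ) % 5 = a ∨ (i : ℕ) % 5 = b} = 2 * (n / 5) := by
  have hblock : ∀ a < 5, ∀ b < 5, a ≠ b →
      ∑ k ∈ range 5, (if k % 5 = a ∨ k % 5 = b then 1 else 0) = 2 := by
    decide
  obtain ⟨q, rfl⟩ : ∃ q, n = 5 * q := ⟨n / 5, by omega⟩
  rw [card_filter, Fin.sum_univ_eq_sum_range (fun i => if i % 5 = a ∨ i % 5 = b then 1 else 0),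
    sum_range_mul_eq_sum_sum]
  simp only [Nat.mul_add_mod, hblock a ha b hb hab, sum_const, card_range, smul_eq_mul]
  omega

open Fin.CommRing in
theorem Fin.natCast_ne_zero_of_lt {n k : ℕ} [NeZero n] (h0 : 0 < k) (hk : k < n) :
    (k : Fin n) ≠ 0 := by
  rw [Ne, Fin.natCast_eq_zero]
  exact Nat.not_dvd_of_pos_of_lt h0 hk

namespace SimpleGraph

variable {V : Type*} {G : SimpleGraph V}

theorem dist_eq_two_iff {u v : V} :
    G.dist u v = 2 ↔ u ≠ v ∧ ¬G.Adj u v ∧ (G.commonNeighbors u v).Nonempty := by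
  rw [dist, ENat.toNat_eq_iff two_ne_zero]
  exact edist_eq_two_iff

def NeighborsAlong (G : SimpleGraph V) (x : ℕ → V) (n : ℕ) : Prop :=
  ∀ i < n, ∀ u, G.Adj (x (i + 1)) u → u = x i ∨ u = x (i + 2)

theorem NeighborsAlong.mono {x : ℕ → V} {m n : ℕ} (h : G.NeighborsAlong x n) (hmn : m ≤ n) :
    G.NeighborsAlong x m :=
  fun i hi => h i (by omega)

theorem NeighborsAlong.shift {x : ℕ → V} {m n : ℕ} (h : G.NeighborsAlong x (m + n)) :
    G.NeighborsAlong (fun k => x (m + k)) n :=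
  fun i hi => h (m + i) (by omega)

end SimpleGraph

theorem two_le_of_window_constraints (w₀ w₁ w₂ w₃ w₄ w₅ w₆ : Bool)
    (h₂ : w₁ ∨ w₃ ∨ (w₀ ∧ w₄)) (h₃ : w₂ ∨ w₄ ∨ (w₁ ∧ w₅)) (h₄ : w₃ ∨ w₅ ∨ (w₂ ∧ w₆)) :
    2 ≤ w₁.toNat + w₂.toNat + w₃.toNat + w₄.toNat + w₅.toNat := by
  revert w₀ w₁ w₂ w₃ w₄ w₅ w₆
  decide

-- The weights count how many of the five windows `w_{j+1}, …, w_{j+5}` contain each position.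
theorem six_le_of_junction_constraints (w₀ w₁ w₂ w₃ w₄ w₅ w₆ w₇ w₈ w₉ w₁₀ : Bool)
    (h₂ : w₁ ∨ w₃ ∨ (w₀ ∧ w₄)) (h₃ : w₂ ∨ w₄ ∨ (w₁ ∧ w₅))
    (h₇ : w₆ ∨ w₈ ∨ (w₅ ∧ w₉)) (h₈ : w₇ ∨ w₉ ∨ (w₆ ∧ w₁₀)) :
    6 ≤ w₁.toNat + 2 * w₂.toNat + 3 * w₃.toNat + 4 * w₄.toNat + 5 * w₅.toNat +
      4 * w₆.toNat + 3 * w₇.toNat + 2 * w₈.toNat + w₉.toNat := by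
  revert w₀ w₁ w₂ w₃ w₄ w₅ w₆ w₇ w₈ w₉ w₁₀
  decide

section DisjunctiveDomination

variable {V : Type*} {G : SimpleGraph V} {S : Finset V}

theorem IsDTDSet.mem_or_mem_or_mem_and_mem {x : ℕ → V} (hS : IsDTDSet G S)
    (hx : G.NeighborsAlong x 3) :
    x 1 ∈ S ∨ x 3 ∈ S ∨ (x 0 ∈ S ∧ x 4 ∈ S) := by
  have hdist : ∀ u, G.dist (x 2) u = 2 → u = x 0 ∨ u = x 4 := by
    intro u hu
    obtain ⟨hne, -, m, hm⟩ := dist_eq_two_iff.1 hu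
    rw [mem_commonNeighbors] at hm
    rcases hx 1 (by norm_num) m hm.1 with rfl | rfl
    · exact (hx 0 (by norm_num) u hm.2.symm).imp_right fun h => absurd h.symm hne
    · exact (hx 2 (by norm_num) u hm.2.symm).imp_left fun h => absurd h.symm hne
  rcases hS (x 2) with ⟨u, hu, hadj⟩ | ⟨u, hu, w, hw, huw, hdu, hdw⟩
  · rcases hx 1 (by norm_num) u hadj with rfl | rfl
    exacts [Or.inl hu, Or.inr (Or.inl hu)]
  · right; right
    rcases hdist u hdu with rfl | rfl <;> rcases hdist w hdw with rfl | rfl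
    exacts [absurd rfl huw, ⟨hu, hw⟩, ⟨hw, hu⟩, absurd rfl huw]

theorem IsDTDSet.two_le_sum_window [DecidableEq V] {x : ℕ → V} (hS : IsDTDSet G S)
    (hx : G.NeighborsAlong x 5) :
    2 ≤ ∑ k ∈ range 5, if x (k + 1) ∈ S then 1 else 0 := by
  have h₂ := hS.mem_or_mem_or_mem_and_mem (hx.mono (by norm_num))
  have h₃ := hS.mem_or_mem_or_mem_and_mem (hx.mono (m := 1 + 3) (by norm_num)).shift
  have h₄ := hS.mem_or_mem_or_mem_and_mem (hx.mono (m := 2 + 3) (by norm_num)).shift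
  have := two_le_of_window_constraints (decide (x 0 ∈ S)) (decide (x 1 ∈ S))
    (decide (x 2 ∈ S)) (decide (x 3 ∈ S)) (decide (x 4 ∈ S)) (decide (x 5 ∈ S))
    (decide (x 6 ∈ S)) (by simpa using h₂) (by simpa using h₃) (by simpa using h₄)
  simp only [sum_range_succ, sum_range_zero, zero_add, Nat.reduceAdd, Bool.toNat,
    Bool.cond_decide] at this ⊢
  omega

theorem IsDTDSet.six_le_sum_windows [DecidableEq V] {x : ℕ → V} (hS : IsDTDSet G S)
    (hx : G.NeighborsAlong x 4) (hx' : G.NeighborsAlong (fun k => x (5 + k)) 4) :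
    6 ≤ ∑ j ∈ range 5, ∑ k ∈ range 5, if x (j + k + 1) ∈ S then 1 else 0 := by
  have h₂ := hS.mem_or_mem_or_mem_and_mem (hx.mono (by norm_num))
  have h₃ := hS.mem_or_mem_or_mem_and_mem (hx.mono (m := 1 + 3) (by norm_num)).shift
  have h₇ := hS.mem_or_mem_or_mem_and_mem (hx'.mono (by norm_num))
  have h₈ := hS.mem_or_mem_or_mem_and_mem (hx'.mono (m := 1 + 3) (by norm_num)).shift
  have := six_le_of_junction_constraints (decide (x 0 ∈ S)) (decide (x 1 ∈ S))
    (decide (x 2 ∈ S)) (decide (x 3 ∈ S)) (decide (x 4 ∈ S)) (decide (x 5 ∈ S))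
    (decide (x 6 ∈ S)) (decide (x 7 ∈ S)) (decide (x 8 ∈ S)) (decide (x 9 ∈ S))
    (decide (x 10 ∈ S)) (by simpa using h₂) (by simpa using h₃) (by simpa using h₇)
    (by simpa using h₈)
  simp only [sum_range_succ, sum_range_zero, zero_add, Nat.reduceAdd, Bool.toNat,
    Bool.cond_decide] at this ⊢
  omega

theorem dtdNum_eq_of_isDTDSet (hS : IsDTDSet G S)
    (hmin : ∀ T, IsDTDSet G T → #S ≤ #T) : dtdNum G = #S :=
  IsLeast.csInf_eq ⟨⟨S, hS, rfl⟩, by rintro _ ⟨T, hT, rfl⟩; exact hmin T hT⟩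

end DisjunctiveDomination

section KeyGraph

open Fin.CommRing

variable {r s : ℕ}

theorem keyG_adj_inr_inr {a b : Fin s} :
    (keyG r s).Adj (.inr a) (.inr b) ↔ (a : ℕ) + 1 = b ∨ (b : ℕ) + 1 = a := by
  simp only [keyG, fromRel_adj, ne_eq, Sum.inr.injEq]
  refine ⟨And.right, fun h => ⟨?_, h⟩⟩
  rintro rfl
  omega

theorem keyG_dist_inr_inr {a b : Fin s} (h : (b : ℕ) = a + 2) :
    (keyG r s).dist (.inr a) (.inr b) = 2 := by
  rw [dist_eq_two_iff, keyG_adj_inr_inr]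
  refine ⟨fun h' => ?_, by omega, .inr ⟨a + 1, by omega⟩, ?_⟩
  · rw [Sum.inr.injEq, Fin.ext_iff] at h'
    omega
  · rw [mem_commonNeighbors, keyG_adj_inr_inr, keyG_adj_inr_inr]
    dsimp only
    omega

def keyDTDSet (r s : ℕ) : Finset (Fin r ⊕ Fin s) :=
  ({i : Fin r | (i : ℕ) % 5 = 1 ∨ (i : ℕ) % 5 = 2} : Finset _).disjSum
    {j : Fin s | (j : ℕ) % 5 = 2 ∨ (j : ℕ) % 5 = 3}

theorem inl_mem_keyDTDSet {i : Fin r} :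
    .inl i ∈ keyDTDSet r s ↔ (i : ℕ) % 5 = 1 ∨ (i : ℕ) % 5 = 2 := by
  simp [keyDTDSet]

theorem inr_mem_keyDTDSet {j : Fin s} :
    .inr j ∈ keyDTDSet r s ↔ (j : ℕ) % 5 = 2 ∨ (j : ℕ) % 5 = 3 := by
  simp [keyDTDSet]

theorem card_keyDTDSet (hr : r % 5 = 0) (hs : s % 5 = 0) :
    #(keyDTDSet r s) = 2 * (r + s) / 5 := by
  rw [keyDTDSet, card_disjSum, card_filter_mod_five hr, card_filter_mod_five hs]
  all_goals omega

variable [NeZero r]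

theorem keyG_adj_inl_inl (hr : 2 ≤ r) {i j : Fin r} :
    (keyG r s).Adj (.inl i) (.inl j) ↔ j = i + 1 ∨ i = j + 1 := by
  have hsucc : ∀ a b : Fin r, ((a : ℕ) + 1) % r = b ↔ b = a + 1 := fun a b => by
    rw [Fin.ext_iff, Fin.val_add, Fin.val_one', Nat.mod_eq_of_lt (by omega : 1 < r), eq_comm]
  have hone : (1 : Fin r) ≠ 0 := by exact_mod_cast Fin.natCast_ne_zero_of_lt one_pos (by omega)
  simp only [keyG, fromRel_adj, ne_eq, Sum.inl.injEq]
  rw [hsucc, hsucc]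
  refine ⟨And.right, fun h => ⟨?_, h⟩⟩
  rintro rfl
  rcases h with h | h <;> exact hone (left_eq_add.1 h)

theorem keyG_adj_inl_inr {i : Fin r} {j : Fin s} :
    (keyG r s).Adj (.inl i) (.inr j) ↔ i = 0 ∧ (j : ℕ) = 0 := by
  simp only [keyG, fromRel_adj, ne_eq, reduceCtorEq, not_false_eq_true, true_and, or_false]
  rw [Fin.ext_iff, Fin.val_zero]

theorem keyG_adj_inl (hr : 2 ≤ r) {i : Fin r} {v : Fin r ⊕ Fin s}
    (h : (keyG r s).Adj (.inl i) v) :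
    v = .inl (i + 1) ∨ v = .inl (i - 1) ∨ i = 0 := by
  rcases v with j | j
  · rcases (keyG_adj_inl_inl hr).1 h with rfl | rfl
    exacts [Or.inl rfl, Or.inr (Or.inl (by simp))]
  · exact Or.inr (Or.inr (keyG_adj_inl_inr.1 h).1)

theorem neighborsAlong_cycle (hr : 2 ≤ r) (t : Fin r) {n : ℕ}
    (ht : ∀ k < n, t + (k + 1 : ℕ) ≠ 0) :
    (keyG r s).NeighborsAlong (fun k => .inl (t + k)) n := by
  intro i hi v hv
  rcases keyG_adj_inl hr hv with rfl | rfl | h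
  · right; congr 1; push_cast; ring
  · left; congr 1; push_cast; ring
  · exact absurd h (ht i hi)

theorem keyG_dist_inl_inl (hr : 5 ≤ r) {i j : Fin r} (h : j = i + 2) :
    (keyG r s).dist (.inl i) (.inl j) = 2 := by
  have hk : ∀ k : ℕ, 0 < k → k < 5 → (k : Fin r) ≠ 0 := fun k h0 hk =>
    Fin.natCast_ne_zero_of_lt h0 (by omega)
  have h1 : (1 : Fin r) ≠ 0 := by exact_mod_cast hk 1 (by norm_num) (by norm_num)
  have h2 : (2 : Fin r) ≠ 0 := by exact_mod_cast hk 2 (by norm_num) (by norm_num)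
  have h3 : (3 : Fin r) ≠ 0 := by exact_mod_cast hk 3 (by norm_num) (by norm_num)
  subst h
  rw [dist_eq_two_iff, keyG_adj_inl_inl (by omega)]
  refine ⟨fun h => h2 ?_, ?_, .inl (i + 1), ?_⟩
  · linear_combination (Sum.inl_injective h).symm
  · rintro (h | h)
    exacts [h1 (by linear_combination h), h3 (by linear_combination -h)]
  · rw [mem_commonNeighbors, keyG_adj_inl_inl (by omega), keyG_adj_inl_inl (by omega)]
    exact ⟨Or.inl rfl, Or.inr (by ring)⟩

theorem keyG_dist_inr_zero_inl_one (hr : 5 ≤ r) {j : Fin s} (hj : (j : ℕ) = 0) :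
    (keyG r s).dist (.inr j) (.inl 1) = 2 := by
  have h1 : (1 : Fin r) ≠ 0 := by exact_mod_cast Fin.natCast_ne_zero_of_lt one_pos (by omega)
  rw [dist_eq_two_iff, adj_comm, keyG_adj_inl_inr]
  refine ⟨Sum.inr_ne_inl, fun h => h1 h.1, .inl 0, ?_⟩
  rw [mem_commonNeighbors, adj_comm, keyG_adj_inl_inr, keyG_adj_inl_inl (by omega)]
  exact ⟨⟨rfl, hj⟩, Or.inr (by ring)⟩

theorem keyDTDSet_dominates_inl (hr : 5 ≤ r) (hr5 : r % 5 = 0) (i : Fin r) :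
    (∃ u ∈ keyDTDSet r s, (keyG r s).Adj (.inl i) u) ∨
      ∃ u ∈ keyDTDSet r s, ∃ w ∈ keyDTDSet r s, u ≠ w ∧
        (keyG r s).dist (.inl i) u = 2 ∧ (keyG r s).dist (.inl i) w = 2 := by
  have hmod : ∀ (a : Fin r) (k : ℕ), ((a + k : Fin r) : ℕ) % 5 = ((a : ℕ) + k) % 5 := by
    intro a k
    rw [Fin.val_add, Fin.val_natCast, Nat.mod_mod_of_dvd _ (Nat.dvd_of_mod_eq_zero hr5),
      Nat.add_mod, Nat.mod_mod_of_dvd _ (Nat.dvd_of_mod_eq_zero hr5), ← Nat.add_mod]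
  have hsucc : ((i + 1 : Fin r) : ℕ) % 5 = ((i : ℕ) + 1) % 5 := by exact_mod_cast hmod i 1
  have hsucc₂ : ((i + 2 : Fin r) : ℕ) % 5 = ((i : ℕ) + 2) % 5 := by exact_mod_cast hmod i 2
  have hpred : (((i - 1 : Fin r) : ℕ) + 1) % 5 = (i : ℕ) % 5 := by
    simpa using (hmod (i - 1) 1).symm
  have hpred₂ : (((i - 2 : Fin r) : ℕ) + 2) % 5 = (i : ℕ) % 5 := by
    simpa using (hmod (i - 2) 2).symm
  have hr2 : 2 ≤ r := by omega
  rcases (by omega : (i : ℕ) % 5 < 2 ∨ (2 ≤ (i : ℕ) % 5 ∧ (i : ℕ) % 5 < 4) ∨ (i : ℕ) % 5 = 4)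
    with h | h | h
  · exact Or.inl ⟨.inl (i + 1), inl_mem_keyDTDSet.2 (by omega),
      (keyG_adj_inl_inl hr2).2 (Or.inl rfl)⟩
  · exact Or.inl ⟨.inl (i - 1), inl_mem_keyDTDSet.2 (by omega),
      (keyG_adj_inl_inl hr2).2 (Or.inr (by ring))⟩
  · refine Or.inr ⟨.inl (i - 2), inl_mem_keyDTDSet.2 (by omega), .inl (i + 2),
      inl_mem_keyDTDSet.2 (by omega), fun h' => ?_, ?_, keyG_dist_inl_inl (i := i) hr rfl⟩
    · rw [Sum.inl.injEq] at h'
      rw [h'] at hpred₂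
      omega
    · rw [SimpleGraph.dist_comm]
      exact keyG_dist_inl_inl hr (by ring)

theorem keyDTDSet_dominates_inr (hr : 5 ≤ r) (hs : s % 5 = 0) (j : Fin s) :
    (∃ u ∈ keyDTDSet r s, (keyG r s).Adj (.inr j) u) ∨
      ∃ u ∈ keyDTDSet r s, ∃ w ∈ keyDTDSet r s, u ≠ w ∧
        (keyG r s).dist (.inr j) u = 2 ∧ (keyG r s).dist (.inr j) w = 2 := by
  have hj := j.isLt
  rcases (by omega : (j : ℕ) % 5 = 1 ∨ (j : ℕ) % 5 = 2 ∨ (j : ℕ) % 5 = 3 ∨ (j : ℕ) % 5 = 4 ∨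
      (j : ℕ) = 0 ∨ ((j : ℕ) % 5 = 0 ∧ 5 ≤ (j : ℕ))) with h | h | h | h | h | ⟨h, h5⟩
  iterate 2
    exact Or.inl ⟨.inr ⟨j + 1, by omega⟩, inr_mem_keyDTDSet.2 (by dsimp only; omega),
      keyG_adj_inr_inr.2 (Or.inl rfl)⟩
  iterate 2
    exact Or.inl ⟨.inr ⟨j - 1, by omega⟩, inr_mem_keyDTDSet.2 (by dsimp only; omega),
      keyG_adj_inr_inr.2 (Or.inr (by dsimp only; omega))⟩
  · exact Or.inr ⟨.inr ⟨2, by omega⟩, inr_mem_keyDTDSet.2 (by simp), .inl 1,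
      inl_mem_keyDTDSet.2 (by simp [Nat.mod_eq_of_lt (by omega : 1 < r)]),
      Sum.inr_ne_inl, keyG_dist_inr_inr (by dsimp only; omega), keyG_dist_inr_zero_inl_one hr h⟩
  · refine Or.inr ⟨.inr ⟨j - 2, by omega⟩, inr_mem_keyDTDSet.2 (by dsimp only; omega),
      .inr ⟨j + 2, by omega⟩, inr_mem_keyDTDSet.2 (by dsimp only; omega), by simp; omega, ?_,
      keyG_dist_inr_inr (by simp)⟩
    rw [SimpleGraph.dist_comm]
    exact keyG_dist_inr_inr (by dsimp only; omega)

theorem isDTDSet_keyDTDSet (hr : 5 ≤ r) (hr5 : r % 5 = 0) (hs : s % 5 = 0) :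
    IsDTDSet (keyG r s) (keyDTDSet r s) := by
  rintro (i | j)
  exacts [keyDTDSet_dominates_inl hr hr5 i, keyDTDSet_dominates_inr hr hs j]

def cycleWindow (S : Finset (Fin r ⊕ Fin s)) (t : Fin r) : ℕ :=
  ∑ k ∈ range 5, if .inl (t + k) ∈ S then 1 else 0

theorem sum_cycleWindow (S : Finset (Fin r ⊕ Fin s)) :
    ∑ t, cycleWindow S t = 5 * ∑ i : Fin r, if .inl i ∈ S then 1 else 0 := by
  have hrot : ∀ c : Fin r, ∑ t : Fin r, (if .inl (t + c) ∈ S then 1 else 0) =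
      ∑ i : Fin r, if .inl i ∈ S then 1 else 0 :=
    fun c => Equiv.sum_comp (Equiv.addRight c) fun i => if .inl i ∈ S then 1 else 0
  simp only [cycleWindow]
  rw [sum_comm]
  simp only [hrot, sum_const, card_range, smul_eq_mul]

variable {S : Finset (Fin r ⊕ Fin s)}

theorem two_le_cycleWindow (hr : 2 ≤ r) (hS : IsDTDSet (keyG r s) S) {t : Fin r}
    (ht : ∀ k < 5, t + (k : ℕ) ≠ 0) : 2 ≤ cycleWindow S t := by
  have hshift : ∀ k : ℕ, t - 1 + (k + 1 : ℕ) = t + k := fun k => by push_cast; ring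
  refine (hS.two_le_sum_window (neighborsAlong_cycle hr (t - 1) fun k hk => ?_)).trans_eq ?_
  · rw [hshift]; exact ht k hk
  · simp only [hshift, cycleWindow]

theorem six_le_sum_cycleWindow (hr : 5 ≤ r) (hS : IsDTDSet (keyG r s) S) :
    6 ≤ ∑ j ∈ range 5, cycleWindow S (j - 4) := by
  refine (hS.six_le_sum_windows (x := fun k => .inl (-5 + k)) ?_ ?_).trans_eq ?_
  · refine neighborsAlong_cycle (by omega) _ fun k hk => ?_
    have hneg : -5 + ((k + 1 : ℕ) : Fin r) = -((4 - k : ℕ) : Fin r) := by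
      push_cast [Nat.cast_sub (by omega : k ≤ 4)]
      ring
    rw [hneg, neg_ne_zero]
    exact Fin.natCast_ne_zero_of_lt (by omega) (by omega)
  · have h₀ := neighborsAlong_cycle (r := r) (s := s) (by omega) 0 (n := 4) fun k hk => by
      simpa using Fin.natCast_ne_zero_of_lt (n := r) k.succ_pos (by omega)
    convert h₀ using 2 with k
    congr 1
    push_cast
    ring
  · refine sum_congr rfl fun j _ => sum_congr rfl fun k _ => ?_
    rw [show -5 + ((j + k + 1 : ℕ) : Fin r) = (j : Fin r) - 4 + k by push_cast; ring]

theorem IsDTDSet.two_mul_le_five_mul_card_toLeft (hr : 5 ≤ r) (hS : IsDTDSet (keyG r s) S) :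
    2 * r ≤ 5 * #S.toLeft + 4 := by
  classical
  have hinj : Set.InjOn (fun j : ℕ => (j : Fin r) - 4) (range 5) := by
    intro a ha b hb hab
    simp only [coe_range, Set.mem_Iio] at ha hb
    have := congrArg Fin.val (sub_left_injective hab)
    simpa [Fin.val_natCast, Nat.mod_eq_of_lt (by omega : a < r),
      Nat.mod_eq_of_lt (by omega : b < r)] using this
  set J := (range 5).image fun j : ℕ => (j : Fin r) - 4
  have hinner : ∀ t ∈ Jᶜ, 2 ≤ cycleWindow S t := fun t ht =>
    two_le_cycleWindow (by omega) hS fun k hk h0 => by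
      refine mem_compl.1 ht (mem_image.2 ⟨4 - k, mem_range.2 (by omega), ?_⟩)
      rw [Nat.cast_sub (by omega), eq_neg_of_add_eq_zero_left h0]
      push_cast
      ring
  have hcompl : #Jᶜ • 2 ≤ ∑ t ∈ Jᶜ, cycleWindow S t := card_nsmul_le_sum _ _ _ hinner
  rw [card_compl, card_image_of_injOn hinj, card_range, Fintype.card_fin, smul_eq_mul] at hcompl
  have htotal := sum_add_sum_compl J (cycleWindow S)
  rw [sum_image hinj, sum_cycleWindow] at htotal
  have hjunction := six_le_sum_cycleWindow hr hS
  rw [card_toLeft_eq_sum]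
  omega

variable [NeZero s]

-- `keyPath r s (s + 1)` wraps around to `p_0`; it only occurs as the missing outer neighbour
-- of the end vertex `p_{s-1}`.
def keyPath (r s : ℕ) [NeZero r] [NeZero s] : ℕ → Fin r ⊕ Fin s
  | 0 => .inl 0
  | k + 1 => .inr k

theorem neighborsAlong_keyPath : (keyG r s).NeighborsAlong (keyPath r s) s := by
  intro i hi v hv
  have hval : ((i : Fin s) : ℕ) = i := by rw [Fin.val_natCast, Nat.mod_eq_of_lt hi]
  rcases v with j | j
  · obtain ⟨rfl, h0⟩ := keyG_adj_inl_inr.1 hv.symm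
    obtain rfl : i = 0 := by omega
    exact Or.inl rfl
  · rcases keyG_adj_inr_inr.1 hv with h | h <;> rw [hval] at h
    · refine Or.inr (congrArg Sum.inr (Fin.ext ?_))
      rw [Fin.val_natCast, Nat.mod_eq_of_lt (by omega)]
      omega
    · obtain rfl : i = j + 1 := h.symm
      exact Or.inl (congrArg Sum.inr (Fin.cast_val_eq_self j).symm)

theorem IsDTDSet.two_mul_le_five_mul_card_toRight (hs : s % 5 = 0) (hS : IsDTDSet (keyG r s) S) :
    2 * s ≤ 5 * #S.toRight := by
  obtain ⟨q, rfl⟩ : ∃ q, s = 5 * q := ⟨s / 5, by omega⟩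
  have hblocks : #S.toRight =
      ∑ m ∈ range q, ∑ k ∈ range 5, if keyPath r (5 * q) (5 * m + k + 1) ∈ S then 1 else 0 := by
    rw [card_toRight_eq_sum, ← sum_range_mul_eq_sum_sum
      (fun i => if keyPath r (5 * q) (i + 1) ∈ S then 1 else 0), ← Fin.sum_univ_eq_sum_range]
    simp only [keyPath, Fin.cast_val_eq_self]
  have hblock : ∀ m ∈ range q,
      2 ≤ ∑ k ∈ range 5, if keyPath r (5 * q) (5 * m + k + 1) ∈ S then 1 else 0 := fun m hm =>
    hS.two_le_sum_window (x := fun k => keyPath r (5 * q) (5 * m + k))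
      (neighborsAlong_keyPath.mono (by rw [mem_range] at hm; omega)).shift
  have := card_nsmul_le_sum _ _ _ hblock
  rw [card_range, smul_eq_mul] at this
  omega

end KeyGraph

/-- For the key L_{r,s} with r ≡ 0 (mod 5), s ≡ 0 (mod 5), r ≥ 5, s ≥ 1, the
disjunctive total domination number is 2n/5 where n = r + s. -/
theorem dtd_key (r s : ℕ) (hr : r % 5 = 0) (hs : s % 5 = 0) (hr5 : 5 ≤ r)
    (hs1 : 1 ≤ s) :
    dtdNum (keyG r s) = 2 * (r + s) / 5 := by
  have : NeZero r := ⟨by omega⟩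
  have : NeZero s := ⟨by omega⟩
  refine (dtdNum_eq_of_isDTDSet (isDTDSet_keyDTDSet hr5 hr hs) fun T hT => ?_).trans
    (card_keyDTDSet hr hs)
  have hcycle := hT.two_mul_le_five_mul_card_toLeft hr5
  have hpath := hT.two_mul_le_five_mul_card_toRight hs
  rw [card_keyDTDSet hr hs, ← card_toLeft_add_card_toRight (u := T)]
  omega
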